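/- arXiv:2512.04865 — 2 statements merged into one kernel-verified Lean document; each statement's English description precedes it below -/
import Mathlib

section
/- Let λ ∈ ℝ^{n+1} be weakly decreasing and P_λ = conv(S_{n+1}·λ). A dominant point x (i.e. x₁ ≥ x₂ ≥ ... ≥ x_{n+1}, Σxᵢ = Σλᵢ, x ∈ P_λ) lies on the boundary ∂P_λ if and only if at least one of the inequalities x₁ + ... + x_k ≤ λ₁ + ... + λ_k (1 ≤ k ≤ n) holds with equality, assuming λ has at least two distinct coordinate values. -/
/-!
By Rado's theorem, `permPolytope l` consists of the `z` with `∑ i, z i = ∑ i, l i` and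
`∑ i ∈ A, z i ≤ λ₁ + ⋯ + λ_{#A}` for every `A`. For a dominant `x` the prefix sets are the binding
ones, so if all `n` prefix inequalities are strict, a whole neighbourhood of `x` in the hyperplane
`∑ i, z i = ∑ i, l i`, which contains the affine span, lies in the polytope. Conversely, an equality
for the prefix of length `k` makes `z ↦ z₁ + ⋯ + z_k` maximal at `x`, while the vertex obtained by
swapping the largest and smallest entries of `λ` has a strictly smaller value; a linear functional
that is maximal at an intrinsic interior point is constant on the set.
-/

def permPolytope {n : ℕ} (l : Fin n → ℝ) : Set (Fin n → ℝ) :=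
  convexHull ℝ {y | ∃ σ : Equiv.Perm (Fin n), y = l ∘ σ}

open Finset Topology

theorem mem_intrinsicInterior_of_isOpen {𝕜 V P : Type*} [Ring 𝕜] [AddCommGroup V] [Module 𝕜 V]
    [TopologicalSpace P] [AddTorsor V P] {s U : Set P} {x : P} (hU : IsOpen U) (hxU : x ∈ U)
    (hxs : x ∈ s) (hUs : U ∩ affineSpan 𝕜 s ⊆ s) : x ∈ intrinsicInterior 𝕜 s :=
  ⟨⟨x, subset_affineSpan 𝕜 s hxs⟩,
    mem_interior.2 ⟨Subtype.val ⁻¹' U, fun a ha => hUs ⟨ha, a.2⟩,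
      hU.preimage continuous_subtype_val, hxU⟩, rfl⟩

/-- The line from `y` through `x` stays in `s` slightly beyond `x`, where `f` exceeds `f x`. -/
theorem notMem_intrinsicInterior_of_isMaxOn {E : Type*} [AddCommGroup E] [Module ℝ E]
    [TopologicalSpace E] [IsTopologicalAddGroup E] [ContinuousSMul ℝ E] {s : Set E} {x y : E}
    {f : E →ᵃ[ℝ] ℝ} (hmax : IsMaxOn f s x) (hy : y ∈ s) (hlt : f y < f x) :
    x ∉ intrinsicInterior ℝ s := by
  rintro ⟨x', hx', rfl⟩
  let γ : ℝ → affineSpan ℝ s := fun t =>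
    ⟨AffineMap.lineMap y x' t, AffineMap.lineMap_mem t (subset_affineSpan ℝ s hy) x'.2⟩
  have hγ : Continuous γ := AffineMap.lineMap_continuous.subtype_mk _
  have hγ1 : γ 1 = x' := Subtype.ext (AffineMap.lineMap_apply_one _ _)
  have hev : ∀ᶠ t in 𝓝[>] (1 : ℝ), γ t ∈ interior (Subtype.val ⁻¹' s) :=
    nhdsWithin_le_nhds (hγ.continuousAt.preimage_mem_nhds (hγ1 ▸ isOpen_interior.mem_nhds hx'))
  obtain ⟨t, ht, ht1⟩ := (hev.and self_mem_nhdsWithin).exists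
  have hle : f (AffineMap.lineMap y x' t) ≤ f x' := hmax (interior_subset ht : γ t ∈ _)
  rw [AffineMap.apply_lineMap, AffineMap.lineMap_apply_module, smul_eq_mul, smul_eq_mul] at hle
  nlinarith [show (1 : ℝ) < t from ht1]

theorem Fin.val_le_of_strictMono {m n : ℕ} {f : Fin m → Fin n} (hf : StrictMono f) (i : Fin m) :
    (i : ℕ) ≤ f i := by
  have : (Iio i).map ⟨f, hf.injective⟩ ⊆ Iio (f i) := by
    intro j hj
    obtain ⟨a, ha, rfl⟩ := mem_map.1 hj
    exact mem_Iio.2 (hf (mem_Iio.1 ha))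
  simpa using card_le_card this

theorem Fin.apply_last_lt_apply_zero {α : Type*} [LinearOrder α] {n : ℕ} {l : Fin (n + 1) → α}
    (hl : Antitone l) (hne : ∃ i j, l i ≠ l j) : l (Fin.last n) < l 0 := by
  obtain ⟨i, j, hij⟩ := hne
  by_contra! h
  have hconst : ∀ i, l i = l 0 := fun i => (hl (Fin.zero_le i)).antisymm (h.trans (hl i.le_last))
  exact hij ((hconst i).trans (hconst j).symm)

theorem Fin.card_filter_val_lt_of_le {n k : ℕ} (hk : k ≤ n) :
    #(univ.filter (fun i : Fin n => (i : ℕ) < k)) = k := by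
  simp [Fin.card_filter_val_lt, hk]

namespace PermPolytope

variable {n : ℕ}

noncomputable def partialSum (g : Fin n → ℝ) (k : ℕ) : ℝ :=
  ∑ i ∈ univ.filter (fun i : Fin n => (i : ℕ) < k), g i

def coordSum (A : Finset (Fin n)) : (Fin n → ℝ) →ₗ[ℝ] ℝ :=
  ∑ i ∈ A, LinearMap.proj i

@[simp]
theorem coordSum_apply (A : Finset (Fin n)) (z : Fin n → ℝ) : coordSum A z = ∑ i ∈ A, z i := by
  simp [coordSum]

theorem partialSum_eq_sum_castLE (g : Fin n → ℝ) {k : ℕ} (hk : k ≤ n) :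
    partialSum g k = ∑ i : Fin k, g (Fin.castLE hk i) := by
  have : univ.filter (fun i : Fin n => (i : ℕ) < k) = univ.map (Fin.castLEEmb hk) := by
    ext i
    simp only [mem_filter, mem_univ, true_and, mem_map, Fin.castLEEmb_apply]
    exact ⟨fun h => ⟨⟨i, h⟩, rfl⟩, by rintro ⟨a, rfl⟩; exact a.2⟩
  rw [partialSum, this, sum_map]
  rfl

theorem partialSum_sub (g h : Fin n → ℝ) (k : ℕ) :
    partialSum (g - h) k = partialSum g k - partialSum h k := by
  simp [partialSum, sum_sub_distrib]

/-- The `j`-th smallest index of `B` is at least `j`. -/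
theorem _root_.Antitone.sum_le_partialSum {l : Fin n → ℝ} (hl : Antitone l)
    (B : Finset (Fin n)) : ∑ i ∈ B, l i ≤ partialSum l #B := by
  rw [partialSum_eq_sum_castLE l (by simpa using card_le_univ B)]
  conv_lhs => rw [← B.map_orderEmbOfFin_univ rfl, sum_map]
  exact sum_le_sum fun j _ => hl (Fin.val_le_of_strictMono (B.orderEmbOfFin rfl).strictMono j)

/-- Abel summation: with `W k = partialSum w k`,
`∑ c i * w i = c (n-1) * W n - ∑_{j < n-1} (c (j+1) - c j) * W (j+1)`. -/
theorem sum_mul_nonneg_of_partialSum_nonpos {c w : Fin n → ℝ} (hc : Monotone c)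
    (hw : ∀ k < n, partialSum w k ≤ 0) (hw0 : ∑ i, w i = 0) : 0 ≤ ∑ i, c i * w i := by
  let ofFin : (Fin n → ℝ) → ℕ → ℝ := fun g j => if h : j < n then g ⟨j, h⟩ else 0
  have hpartial : ∀ k (hk : k ≤ n), partialSum w k = ∑ j ∈ range k, ofFin w j := fun k hk => by
    rw [partialSum_eq_sum_castLE w hk, ← Fin.sum_univ_eq_sum_range]
    exact sum_congr rfl fun i _ => by simp [ofFin, Fin.castLE, i.2.trans_le hk]
  have hsum : ∑ i, c i * w i = ∑ j ∈ range n, ofFin c j • ofFin w j := by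
    rw [← Fin.sum_univ_eq_sum_range (fun j => ofFin c j • ofFin w j)]
    simp [ofFin]
  have hWn : ∑ j ∈ range n, ofFin w j = 0 := by
    rw [← hpartial n le_rfl, partialSum_eq_sum_castLE w le_rfl]
    simpa using hw0
  rw [hsum, sum_range_by_parts, hWn, smul_zero, zero_sub, neg_nonneg]
  refine sum_nonpos fun j hj => ?_
  have hj : j + 1 < n := by rw [mem_range] at hj; omega
  rw [← hpartial _ hj.le, smul_eq_mul]
  refine mul_nonpos_of_nonneg_of_nonpos (sub_nonneg.2 ?_) (hw _ hj)
  simpa [ofFin, hj, (Nat.lt_succ_self j).trans hj] using hc (Fin.mk_le_mk.2 (Nat.le_succ j))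

theorem isClosed_permPolytope (l : Fin n → ℝ) : IsClosed (permPolytope l) := by
  have hfin : {y | ∃ σ : Equiv.Perm (Fin n), y = l ∘ σ}.Finite :=
    (Set.finite_range fun σ : Equiv.Perm (Fin n) => l ∘ σ).subset fun _ ⟨σ, hσ⟩ => ⟨σ, hσ.symm⟩
  exact hfin.isClosed_convexHull ℝ

theorem comp_perm_mem_permPolytope {l z : Fin n → ℝ} (hz : z ∈ permPolytope l)
    (π : Equiv.Perm (Fin n)) : z ∘ π ∈ permPolytope l := by
  have hmem : LinearMap.funLeft ℝ ℝ π z ∈ LinearMap.funLeft ℝ ℝ π '' permPolytope l :=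
    ⟨z, hz, rfl⟩
  rw [permPolytope, LinearMap.image_convexHull] at hmem
  refine convexHull_mono ?_ hmem
  rintro _ ⟨_, ⟨σ, rfl⟩, rfl⟩
  exact ⟨π.trans σ, rfl⟩

theorem sum_eq_of_mem_permPolytope {l z : Fin n → ℝ} (hz : z ∈ permPolytope l) :
    ∑ i, z i = ∑ i, l i := by
  have hsub : permPolytope l ⊆ coordSum univ ⁻¹' {∑ i, l i} := by
    refine convexHull_min ?_ ((convex_singleton _).linear_preimage (coordSum univ))
    rintro _ ⟨σ, rfl⟩
    simpa using Equiv.sum_comp σ l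
  simpa using hsub hz

theorem sum_eq_of_mem_affineSpan_permPolytope {l z : Fin n → ℝ}
    (hz : z ∈ affineSpan ℝ (permPolytope l)) : ∑ i, z i = ∑ i, l i := by
  have hP : permPolytope l ⊆ AffineSubspace.mk' l (LinearMap.ker (coordSum univ)) :=
    fun w hw => by simp [AffineSubspace.mem_mk', sum_sub_distrib, sum_eq_of_mem_permPolytope hw]
  simpa [AffineSubspace.mem_mk', sum_sub_distrib, sub_eq_zero] using affineSpan_le.2 hP hz

theorem sum_le_partialSum_of_mem_permPolytope {l z : Fin n → ℝ} (hl : Antitone l)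
    (hz : z ∈ permPolytope l) (A : Finset (Fin n)) : ∑ i ∈ A, z i ≤ partialSum l #A := by
  have hsub : permPolytope l ⊆ coordSum A ⁻¹' Set.Iic (partialSum l #A) := by
    refine convexHull_min ?_ ((convex_Iic _).linear_preimage (coordSum A))
    rintro _ ⟨σ, rfl⟩
    simpa [sum_map] using hl.sum_le_partialSum (A.map σ.toEmbedding)
  simpa using hsub hz

theorem partialSum_le_of_mem_permPolytope {l z : Fin n → ℝ} (hl : Antitone l)
    (hz : z ∈ permPolytope l) {k : ℕ} (hk : k ≤ n) : partialSum z k ≤ partialSum l k := by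
  have := sum_le_partialSum_of_mem_permPolytope hl hz (univ.filter fun i : Fin n => (i : ℕ) < k)
  rwa [Fin.card_filter_val_lt_of_le hk] at this

/-- Rado's theorem for an antitone `y`. A functional `c` separating `y` from `permPolytope l`
is beaten on the vertex `l ∘ τ⁻¹`, where `τ` sorts `c` increasingly: by the rearrangement
inequality and Abel summation, `c · y ≥ (c ∘ τ) · y ≥ (c ∘ τ) · l`. -/
theorem mem_permPolytope_of_antitone {l y : Fin n → ℝ} (hy : Antitone y)
    (hle : ∀ k < n, partialSum y k ≤ partialSum l k) (hsum : ∑ i, y i = ∑ i, l i) :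
    y ∈ permPolytope l := by
  by_contra hyP
  obtain ⟨f, u, hfy, hf⟩ := geometric_hahn_banach_point_closed (convex_convexHull ℝ _)
    (isClosed_permPolytope l) hyP
  let c : Fin n → ℝ := fun i => f fun j => if i = j then 1 else 0
  have hfc : ∀ z, f z = ∑ i, c i * z i := fun z => by
    simpa [c, mul_comm] using LinearMap.pi_apply_eq_sum_univ (f : (Fin n → ℝ) →ₗ[ℝ] ℝ) z
  let τ := Tuple.sort c
  have hmono : Monotone (c ∘ τ) := Tuple.monotone_sort c
  have hrearr : ∑ i, c (τ i) * y i ≤ ∑ i, c i * y i := by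
    simpa using (hmono.antivary hy).sum_mul_le_sum_comp_perm_mul (σ := τ⁻¹)
  have habel : ∑ i, c (τ i) * l i ≤ ∑ i, c (τ i) * y i := by
    have := sum_mul_nonneg_of_partialSum_nonpos hmono (w := y - l)
      (fun k hk => by simpa [partialSum_sub] using hle k hk) (by simp [sum_sub_distrib, hsum])
    simpa [mul_sub] using this
  have hvertex : f (l ∘ τ.symm) = ∑ i, c (τ i) * l i := by
    rw [hfc, ← Equiv.sum_comp τ]
    simp
  linarith [hf _ (subset_convexHull ℝ _ ⟨τ.symm, rfl⟩), hfc y]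

theorem mem_permPolytope_of_sum_le {l z : Fin n → ℝ} (hsum : ∑ i, z i = ∑ i, l i)
    (hle : ∀ A : Finset (Fin n), #A < n → ∑ i ∈ A, z i ≤ partialSum l #A) :
    z ∈ permPolytope l := by
  let ρ : Equiv.Perm (Fin n) := Fin.revPerm.trans (Tuple.sort z)
  have hanti : Antitone (z ∘ ρ) := (Tuple.monotone_sort z).comp_antitone Fin.rev_anti
  have hpartial : ∀ k < n, partialSum (z ∘ ρ) k ≤ partialSum l k := fun k hk => by
    simpa [partialSum, sum_map, Fin.card_filter_val_lt_of_le hk.le] using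
      hle ((univ.filter fun i : Fin n => (i : ℕ) < k).map ρ.toEmbedding)
        (by simpa [Fin.card_filter_val_lt_of_le hk.le] using hk)
  have hmem := mem_permPolytope_of_antitone hanti hpartial (by simpa [Equiv.sum_comp] using hsum)
  simpa [Function.comp_assoc] using comp_perm_mem_permPolytope hmem ρ.symm

theorem mem_intrinsicInterior_permPolytope {l x : Fin (n + 1) → ℝ} (hx : Antitone x)
    (hxP : x ∈ permPolytope l) (hlt : ∀ k, 1 ≤ k → k ≤ n → partialSum x k < partialSum l k) :
    x ∈ intrinsicInterior ℝ (permPolytope l) := by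
  let S := univ.filter fun A : Finset (Fin (n + 1)) => 1 ≤ #A ∧ #A ≤ n
  let U := ⋂ A ∈ S, {z : Fin (n + 1) → ℝ | ∑ i ∈ A, z i < partialSum l #A}
  refine mem_intrinsicInterior_of_isOpen (U := U) ?_ ?_ hxP ?_
  · exact isOpen_biInter_finset fun A _ =>
      isOpen_lt (continuous_finsetSum _ fun i _ => continuous_apply i) continuous_const
  · simp only [U, S, Set.mem_iInter, mem_filter, mem_univ, true_and]
    exact fun A hA => (hx.sum_le_partialSum A).trans_lt (hlt _ hA.1 hA.2)
  · rintro z ⟨hzU, hz⟩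
    refine mem_permPolytope_of_sum_le (sum_eq_of_mem_affineSpan_permPolytope hz) fun A hA => ?_
    rcases A.eq_empty_or_nonempty with rfl | hA0
    · simp [partialSum]
    · simp only [U, S, Set.mem_iInter, mem_filter, mem_univ, true_and] at hzU
      exact (hzU A ⟨hA0.card_pos, by omega⟩).le

theorem notMem_intrinsicInterior_permPolytope {l x : Fin (n + 1) → ℝ} (hl : Antitone l)
    (hne : ∃ i j, l i ≠ l j) {k : ℕ} (hk1 : 1 ≤ k) (hkn : k ≤ n)
    (heq : partialSum x k = partialSum l k) : x ∉ intrinsicInterior ℝ (permPolytope l) := by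
  let W := univ.filter fun i : Fin (n + 1) => (i : ℕ) < k
  have h0 : 0 ∈ W := by simp [W]; omega
  have hlast : Fin.last n ∉ W := by simp [W]; omega
  refine notMem_intrinsicInterior_of_isMaxOn (f := (coordSum W).toAffineMap)
    (y := l ∘ Equiv.swap 0 (Fin.last n)) (fun z hz => ?_) (subset_convexHull ℝ _ ⟨_, rfl⟩) ?_
  · change coordSum W z ≤ coordSum W x
    simp only [coordSum_apply]
    exact (partialSum_le_of_mem_permPolytope hl hz (by omega)).trans heq.ge
  · have hswap : ∀ i ∈ W.erase 0, l (Equiv.swap 0 (Fin.last n) i) = l i := fun i hi =>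
      congrArg l (Equiv.swap_apply_of_ne_of_ne (ne_of_mem_erase hi)
        (ne_of_mem_of_not_mem (mem_of_mem_erase hi) hlast))
    simp only [LinearMap.coe_toAffineMap, coordSum_apply, Function.comp_apply]
    rw [← add_sum_erase W _ h0, sum_congr rfl hswap, Equiv.swap_apply_left]
    change _ < partialSum x k
    rw [heq, partialSum, ← add_sum_erase W _ h0]
    linarith [Fin.apply_last_lt_apply_zero hl hne]

end PermPolytope

open PermPolytope

theorem dominant_mem_boundary_iff_general {n : ℕ} (l : Fin (n + 1) → ℝ)
    (hdec : ∀ i j : Fin (n + 1), i ≤ j → l j ≤ l i)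
    (hne : ∃ i j : Fin (n + 1), l i ≠ l j)
    (x : Fin (n + 1) → ℝ)
    (hxdec : ∀ i j : Fin (n + 1), i ≤ j → x j ≤ x i)
    (hx : x ∈ permPolytope l) :
    x ∈ intrinsicFrontier ℝ (permPolytope l) ↔
      ∃ k : ℕ, 1 ≤ k ∧ k ≤ n ∧
        ∑ i ∈ Finset.univ.filter (fun i : Fin (n + 1) => (i : ℕ) < k), x i =
          ∑ i ∈ Finset.univ.filter (fun i : Fin (n + 1) => (i : ℕ) < k), l i := by
  rw [← closure_sdiff_intrinsicInterior, Set.mem_sdiff, and_iff_right (subset_closure hx)]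
  constructor
  · intro hint
    by_contra! hstrict
    exact hint (mem_intrinsicInterior_permPolytope hxdec hx fun k hk1 hkn =>
      (partialSum_le_of_mem_permPolytope hdec hx (by omega)).lt_of_ne (hstrict k hk1 hkn))
  · rintro ⟨k, hk1, hkn, heq⟩
    exact notMem_intrinsicInterior_permPolytope hdec hne hk1 hkn heq

/-- A dominant point `x` of `P_λ` lies on the (relative) boundary of `P_λ` iff one of
the partial-sum inequalities `x₁ + ⋯ + x_k ≤ λ₁ + ⋯ + λ_k` (`1 ≤ k ≤ n`) is an
equality, provided `λ` is weakly decreasing with at least two distinct values. -/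
theorem dominant_mem_boundary_iff {n : ℕ} (l : Fin (n + 1) → ℝ)
    (hdec : ∀ i j : Fin (n + 1), i ≤ j → l j ≤ l i)
    (hne : ∃ i j : Fin (n + 1), l i ≠ l j)
    (x : Fin (n + 1) → ℝ)
    (hxdec : ∀ i j : Fin (n + 1), i ≤ j → x j ≤ x i)
    (hsum : ∑ i, x i = ∑ i, l i)
    (hx : x ∈ permPolytope l) :
    x ∈ intrinsicFrontier ℝ (permPolytope l) ↔
      ∃ k : ℕ, 1 ≤ k ∧ k ≤ n ∧
        ∑ i ∈ Finset.univ.filter (fun i : Fin (n + 1) => (i : ℕ) < k), x i =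
          ∑ i ∈ Finset.univ.filter (fun i : Fin (n + 1) => (i : ℕ) < k), l i :=
  dominant_mem_boundary_iff_general l hdec hne x hxdec hx
end

section
/- For a weakly decreasing λ ∈ ℤ^{n+1} with all coordinates distinct, the point (λ₁+...+λ_{n+1})/(n+1)·(1,1,...,1) (the barycenter of the S_{n+1}-orbit of λ) lies in the relative interior of P_λ = conv(S_{n+1}·λ). -/
open Set

attribute [local instance] AffineSubspace.toNormedAddTorsor

/-- The intrinsic interior of a convex set is convex. -/
theorem convex_intrinsicInterior' {V : Type*} [NormedAddCommGroup V] [NormedSpace ℝ V]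
    {s : Set V} (hs : Convex ℝ s) : Convex ℝ (intrinsicInterior ℝ s) := by
  rcases s.eq_empty_or_nonempty with rfl | hsne
  · simpa [intrinsicInterior_empty] using convex_empty
  haveI := hsne.coe_sort
  obtain ⟨p, hp⟩ := hsne
  let p' : affineSpan ℝ s := ⟨p, subset_affineSpan _ _ hp⟩
  let e := (AffineIsometryEquiv.constVSub ℝ p').symm
  let f : (affineSpan ℝ s).direction →ᵃ[ℝ] V :=
    ((affineSpan ℝ s).subtype).comp e.toAffineEquiv.toAffineMap
  have hf : ∀ v, f v = ((e v : affineSpan ℝ s) : V) := fun v => rfl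
  have key : intrinsicInterior ℝ s = f '' interior (f ⁻¹' s) := by
    have h1 : ((↑) ⁻¹' s : Set (affineSpan ℝ s)) = e '' (e ⁻¹' ((↑) ⁻¹' s)) := by
      rw [Set.image_preimage_eq _ e.surjective]
    have h2 : interior ((↑) ⁻¹' s : Set (affineSpan ℝ s))
        = e '' interior (e ⁻¹' ((↑) ⁻¹' s)) := by
      conv_lhs => rw [h1]
      exact (e.toHomeomorph.image_interior _).symm
    rw [intrinsicInterior, h2, ← Set.image_comp]
    rfl
  rw [key]
  exact ((hs.affine_preimage f).interior).affine_image f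

/-- Composition with a permutation of coordinates as a linear isometry equivalence. -/
noncomputable def permLIE {m : ℕ} (σ : Equiv.Perm (Fin m)) : (Fin m → ℝ) ≃ₗᵢ[ℝ] (Fin m → ℝ) where
  toLinearEquiv := LinearEquiv.funCongrLeft ℝ ℝ σ
  norm_map' := by
    intro x
    have hx : ∀ y : Fin m → ℝ, ‖y‖ = ((Finset.univ.sup fun b => ‖y b‖₊ : NNReal) : ℝ) :=
      fun y => rfl
    rw [hx, hx]
    have : (LinearEquiv.funCongrLeft ℝ ℝ σ x) = x ∘ σ := rfl
    rw [this]
    congr 1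
    have himg : (Finset.univ : Finset (Fin m)).image σ = Finset.univ :=
      Finset.image_univ_of_surjective σ.surjective
    calc (Finset.univ.sup fun b => ‖(x ∘ σ) b‖₊)
        = (Finset.univ.image σ).sup (fun b => ‖x b‖₊) := by
          rw [Finset.sup_image]; rfl
      _ = Finset.univ.sup fun b => ‖x b‖₊ := by rw [himg]

theorem permLIE_apply {m : ℕ} (σ : Equiv.Perm (Fin m)) (x : Fin m → ℝ) :
    permLIE σ x = x ∘ σ := rfl

theorem permPolytope_image {m : ℕ} (l : Fin m → ℝ) (σ : Equiv.Perm (Fin m)) :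
    (permLIE σ) '' permPolytope l = permPolytope l := by
  unfold permPolytope
  rw [show ((permLIE σ) '' (convexHull ℝ {y | ∃ τ : Equiv.Perm (Fin m), y = l ∘ τ}))
      = convexHull ℝ ((permLIE σ) '' {y | ∃ τ : Equiv.Perm (Fin m), y = l ∘ τ}) from
    (permLIE σ).toLinearEquiv.toLinearMap.image_convexHull _]
  congr 1
  ext y
  constructor
  · rintro ⟨z, ⟨τ, rfl⟩, rfl⟩
    exact ⟨σ.trans τ, rfl⟩
  · rintro ⟨τ, rfl⟩
    refine ⟨l ∘ (σ.symm.trans τ), ⟨σ.symm.trans τ, rfl⟩, ?_⟩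
    rw [permLIE_apply]
    funext i
    simp [Function.comp]

/-- For a weakly decreasing integer vector `λ` with pairwise distinct coordinates,
the barycenter of its orbit under coordinate permutations lies in the relative
interior of the permutohedron `P_λ`. -/
theorem barycenter_mem_intrinsicInterior {n : ℕ} (l : Fin (n + 1) → ℝ)
    (hint : ∀ i, ∃ z : ℤ, l i = z)
    (hdec : ∀ i j : Fin (n + 1), i ≤ j → l j ≤ l i)
    (hdist : ∀ i j : Fin (n + 1), i ≠ j → l i ≠ l j) :
    ((fun _ => (∑ i, l i) / (n + 1)) : Fin (n + 1) → ℝ) ∈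
      intrinsicInterior ℝ (permPolytope l) := by
  classical
  have hconv : Convex ℝ (permPolytope l) := convex_convexHull ℝ _
  have hne : (permPolytope l).Nonempty :=
    ⟨l, subset_convexHull ℝ _ ⟨1, by funext i; rfl⟩⟩
  -- the coordinate-sum is constant on the polytope
  have hsum : ∀ x ∈ permPolytope l, ∑ i, x i = ∑ i, l i := by
    have hsub : permPolytope l ⊆ {y : Fin (n + 1) → ℝ | ∑ i, y i = ∑ i, l i} := by
      apply convexHull_min
      · rintro y ⟨τ, rfl⟩
        simpa using Equiv.sum_comp τ l
      · exact convex_hyperplane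
          ⟨fun a b => by simp [Finset.sum_add_distrib],
           fun c a => by simp [Finset.mul_sum]⟩ _
    exact fun x hx => hsub hx
  -- a point of the intrinsic interior
  obtain ⟨x, hx⟩ := hne.intrinsicInterior hconv
  have hxs : x ∈ permPolytope l := intrinsicInterior_subset hx
  -- the intrinsic interior is stable under coordinate permutations
  have hstab : ∀ σ : Equiv.Perm (Fin (n + 1)),
      (x ∘ σ) ∈ intrinsicInterior ℝ (permPolytope l) := by
    intro σ
    have hcoe : ⇑((permLIE σ).toLinearIsometry.toAffineIsometry) = ⇑(permLIE σ) := rfl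
    have h1 := AffineIsometry.image_intrinsicInterior
      (permLIE σ).toLinearIsometry.toAffineIsometry (permPolytope l)
    rw [hcoe, permPolytope_image] at h1
    rw [h1]
    exact ⟨x, hx, rfl⟩
  -- the barycenter is a positive convex combination of cyclic shifts of x
  have hII : Convex ℝ (intrinsicInterior ℝ (permPolytope l)) := convex_intrinsicInterior' hconv
  have hb : ((fun _ => (∑ i, l i) / (n + 1)) : Fin (n + 1) → ℝ)
      = Finset.univ.centerMass (fun _ : Fin (n + 1) => (1 : ℝ))
          (fun k => x ∘ Equiv.addLeft k) := by
    rw [Finset.centerMass]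
    funext i
    simp only [one_smul, Finset.sum_const, Finset.card_univ, Fintype.card_fin,
      nsmul_eq_mul, mul_one, Pi.smul_apply, Finset.sum_apply, Function.comp_apply,
      smul_eq_mul]
    have hsc : ∑ k : Fin (n + 1), x ((Equiv.addLeft k) i) = ∑ j, x j := by
      have := Equiv.sum_comp (Equiv.addRight i) x
      simpa using this
    rw [hsc, hsum x hxs, div_eq_inv_mul]
    push_cast
    ring
  rw [hb]
  exact hII.centerMass_mem (fun k _ => zero_le_one)
    (by simp; positivity) (fun k _ => hstab (Equiv.addLeft k))
end
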